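/- Fix ℓ with 1 < ℓ < 1/(2α). For a word w ∈ (Fin 4)^n let D_w denote the closed axis-parallel square with center c_w = ∑_{k<n} α^k • v(w k) and sidelength ℓ·α^n (the ℓ-dilate of the generation-n square of the Cantor construction). Then: (i) for every word w and every i ∈ Fin 4, the square D_{w·i} associated to the extended word w·i is contained in the interior of D_w; (ii) if neither of two distinct words w, w' is an initial segment of the other, then D_w ∩ D_{w'} = ∅; (iii) for any two distinct words w ≠ w', the topological boundaries ∂D_w and ∂D_{w'} are disjoint. -/

import Mathlib

/-- The four corner vectors `(±(1-α)/2, ±(1-α)/2)` of the 4-corner Cantor construction. -/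
noncomputable def cornerV (α : ℝ) : Fin 4 → EuclideanSpace ℝ (Fin 2) := fun i =>
  (WithLp.equiv 2 (Fin 2 → ℝ)).symm
    ![if (i : ℕ) % 2 = 0 then (1 - α) / 2 else -((1 - α) / 2),
      if (i : ℕ) < 2 then (1 - α) / 2 else -((1 - α) / 2)]

/-- The coding map `π(x) = ∑ αⁿ • v (x n)` of the 4-corner Cantor set. -/
noncomputable def cantorPi (α : ℝ) (x : ℕ → Fin 4) : EuclideanSpace ℝ (Fin 2) :=
  ∑' n : ℕ, α ^ n • cornerV α (x n)

/-- The center `c_w = ∑_{k<n} α^k • v (w k)` of the generation-`n` square indexed by `w`. -/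
noncomputable def cylCenter (α : ℝ) {n : ℕ} (w : Fin n → Fin 4) :
    EuclideanSpace ℝ (Fin 2) :=
  ∑ k : Fin n, α ^ (k : ℕ) • cornerV α (w k)

/-- The closed axis-parallel square of center `c_w` and sidelength `ℓ·αⁿ`
(the `ℓ`-dilate of the generation-`n` square of the Cantor construction). -/
noncomputable def dilSq (α ℓ : ℝ) {n : ℕ} (w : Fin n → Fin 4) :
    Set (EuclideanSpace ℝ (Fin 2)) :=
  {p | ∀ i : Fin 2, |p i - cylCenter α w i| ≤ ℓ * α ^ n / 2}

/-!
A child square `D_{w·a}` is the parent's centre shifted by `αⁿ (1 - α) / 2` in each coordinate,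
and `ℓ αⁿ⁺¹ / 2 + αⁿ (1 - α) / 2 < ℓ αⁿ / 2` amounts to `(ℓ - 1)(1 - α) > 0`; iterating, `D_w'`
lies in `D_w` whenever `w` is a prefix of `w'`. Sibling squares `D_{w·a}`, `D_{w·b}` have centres
`αⁿ (1 - α)` apart in some coordinate, more than the sum `ℓ αⁿ⁺¹` of their half-sides because
`ℓ α < 1/2 < 1 - α`; two words that are not prefixes of each other give squares inside such
siblings, at their first disagreement. Boundaries of nested squares are disjoint because the inner
square lies in the interior of the outer one.
-/

lemma cylCenter_apply (α : ℝ) {n : ℕ} (w : Fin n → Fin 4) (j : Fin 2) :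
    cylCenter α w j = ∑ k : Fin n, α ^ (k : ℕ) * cornerV α (w k) j := by
  simp [cylCenter]

lemma abs_cornerV_apply {α : ℝ} (hα : α ≤ 1) (a : Fin 4) (j : Fin 2) :
    |cornerV α a j| = (1 - α) / 2 := by
  have : 0 ≤ (1 - α) / 2 := by linarith
  fin_cases a <;> fin_cases j <;> simp [cornerV, abs_of_nonneg this]

lemma exists_abs_cornerV_sub_cornerV {α : ℝ} (hα : α ≤ 1) {a b : Fin 4} (hab : a ≠ b) :
    ∃ j : Fin 2, |cornerV α a j - cornerV α b j| = 1 - α := by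
  have h : |(1 - α) / 2 - -((1 - α) / 2)| = 1 - α := by
    rw [sub_neg_eq_add, add_halves, abs_of_nonneg (by linarith)]
  have h' : |-((1 - α) / 2) - (1 - α) / 2| = 1 - α := by rwa [abs_sub_comm]
  fin_cases a <;> fin_cases b <;> simp at hab <;>
    first
      | exact ⟨0, by simpa [cornerV] using h⟩
      | exact ⟨0, by simpa [cornerV] using h'⟩
      | exact ⟨1, by simpa [cornerV] using h⟩
      | exact ⟨1, by simpa [cornerV] using h'⟩

lemma cylCenter_snoc_apply (α : ℝ) {n : ℕ} (w : Fin n → Fin 4) (a : Fin 4) (j : Fin 2) :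
    cylCenter α (Fin.snoc w a) j = cylCenter α w j + α ^ n * cornerV α a j := by
  simp [cylCenter_apply, Fin.sum_univ_castSucc]

lemma isClosed_dilSq (α ℓ : ℝ) {n : ℕ} (w : Fin n → Fin 4) : IsClosed (dilSq α ℓ w) := by
  simp only [dilSq, Set.ofPred_forall]
  exact isClosed_iInter fun j => isClosed_le (by fun_prop) continuous_const

lemma mem_interior_dilSq {α ℓ : ℝ} {n : ℕ} {w : Fin n → Fin 4} {p : EuclideanSpace ℝ (Fin 2)}
    (hp : ∀ j, |p j - cylCenter α w j| < ℓ * α ^ n / 2) : p ∈ interior (dilSq α ℓ w) := by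
  have hopen : IsOpen {q : EuclideanSpace ℝ (Fin 2) |
      ∀ j, |q j - cylCenter α w j| < ℓ * α ^ n / 2} := by
    simp only [Set.ofPred_forall]
    exact isOpen_iInter_of_finite fun j => isOpen_lt (by fun_prop) continuous_const
  exact interior_maximal (fun q hq j => (hq j).le) hopen hp

lemma dilSq_snoc_subset_interior {α ℓ : ℝ} (hα₀ : 0 < α) (hα₁ : α < 1) (hℓ : 1 < ℓ) {n : ℕ}
    (w : Fin n → Fin 4) (a : Fin 4) :
    dilSq α ℓ (Fin.snoc w a) ⊆ interior (dilSq α ℓ w) := by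
  intro p hp
  refine mem_interior_dilSq fun j => ?_
  have hshift : |cylCenter α (Fin.snoc w a) j - cylCenter α w j| = α ^ n * ((1 - α) / 2) := by
    rw [cylCenter_snoc_apply, add_sub_cancel_left, abs_mul, abs_of_pos (pow_pos hα₀ n),
      abs_cornerV_apply hα₁.le]
  have hgap : 0 < α ^ n * ((ℓ - 1) * (1 - α)) :=
    mul_pos (pow_pos hα₀ n) (mul_pos (sub_pos.2 hℓ) (sub_pos.2 hα₁))
  calc |p j - cylCenter α w j|
      ≤ |p j - cylCenter α (Fin.snoc w a) j| + |cylCenter α (Fin.snoc w a) j - cylCenter α w j| :=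
        abs_sub_le _ _ _
    _ ≤ ℓ * α ^ (n + 1) / 2 + α ^ n * ((1 - α) / 2) := by rw [hshift]; gcongr; exact hp j
    _ < ℓ * α ^ n / 2 := by rw [pow_succ]; linarith

lemma dilSq_subset_dilSq_comp_castLE {α ℓ : ℝ} (hα₀ : 0 < α) (hα₁ : α < 1) (hℓ : 1 < ℓ)
    {n m : ℕ} (h : n ≤ m) (w : Fin m → Fin 4) :
    dilSq α ℓ w ⊆ dilSq α ℓ (w ∘ Fin.castLE h) := by
  induction m, h using Nat.le_induction with
  | base => exact subset_rfl
  | succ m hnm ih =>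
    have hinit := dilSq_snoc_subset_interior hα₀ hα₁ hℓ (Fin.init w) (w (Fin.last m))
    rw [Fin.snoc_init_self] at hinit
    exact hinit.trans <| interior_subset.trans (ih (Fin.init w))

lemma dilSq_subset_interior_dilSq_comp_castLE {α ℓ : ℝ} (hα₀ : 0 < α) (hα₁ : α < 1)
    (hℓ : 1 < ℓ) {n m : ℕ} (h : n < m) (w : Fin m → Fin 4) :
    dilSq α ℓ w ⊆ interior (dilSq α ℓ (w ∘ Fin.castLE h.le)) := by
  have hsnoc := dilSq_snoc_subset_interior hα₀ hα₁ hℓ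
    (Fin.init (w ∘ Fin.castLE h)) ((w ∘ Fin.castLE h) (Fin.last n))
  rw [Fin.snoc_init_self] at hsnoc
  exact (dilSq_subset_dilSq_comp_castLE hα₀ hα₁ hℓ h w).trans hsnoc

lemma disjoint_dilSq_snoc {α ℓ : ℝ} (hα₀ : 0 < α) (hα₁ : α < 1) (hαℓ : ℓ * α < 1 - α) {n : ℕ}
    (w : Fin n → Fin 4) {a b : Fin 4} (hab : a ≠ b) :
    Disjoint (dilSq α ℓ (Fin.snoc w a)) (dilSq α ℓ (Fin.snoc w b)) := by
  obtain ⟨j, hj⟩ := exists_abs_cornerV_sub_cornerV hα₁.le hab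
  rw [Set.disjoint_left]
  intro p hpa hpb
  have hsep : |cylCenter α (Fin.snoc w a) j - cylCenter α (Fin.snoc w b) j| = α ^ n * (1 - α) := by
    rw [cylCenter_snoc_apply, cylCenter_snoc_apply, add_sub_add_left_eq_sub, ← mul_sub, abs_mul,
      abs_of_pos (pow_pos hα₀ n), hj]
  have hgap : 0 < α ^ n * (1 - α - ℓ * α) := mul_pos (pow_pos hα₀ n) (by linarith)
  have hle : α ^ n * (1 - α) ≤ ℓ * α ^ (n + 1) :=
    calc α ^ n * (1 - α)
        = |cylCenter α (Fin.snoc w a) j - cylCenter α (Fin.snoc w b) j| := hsep.symm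
      _ ≤ |p j - cylCenter α (Fin.snoc w a) j| + |p j - cylCenter α (Fin.snoc w b) j| := by
        rw [abs_sub_comm (p j)]; exact abs_sub_le _ _ _
      _ ≤ ℓ * α ^ (n + 1) / 2 + ℓ * α ^ (n + 1) / 2 := add_le_add (hpa j) (hpb j)
      _ = ℓ * α ^ (n + 1) := add_halves _
  rw [pow_succ] at hle
  linarith

lemma disjoint_dilSq_of_first_ne {α ℓ : ℝ} (hα₀ : 0 < α) (hα₁ : α < 1) (hℓ : 1 < ℓ)
    (hαℓ : ℓ * α < 1 - α) {n m j : ℕ} {w : Fin n → Fin 4} {w' : Fin m → Fin 4}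
    (hjn : j < n) (hjm : j < m)
    (hpre : ∀ k : Fin j, w (Fin.castLE hjn.le k) = w' (Fin.castLE hjm.le k))
    (hne : w ⟨j, hjn⟩ ≠ w' ⟨j, hjm⟩) :
    Disjoint (dilSq α ℓ w) (dilSq α ℓ w') := by
  set u := w ∘ Fin.castLE hjn
  set u' := w' ∘ Fin.castLE hjm
  have hinit : Fin.init u = Fin.init u' := funext hpre
  have hdisj := disjoint_dilSq_snoc hα₀ hα₁ hαℓ (Fin.init u) (a := u (Fin.last j))
    (b := u' (Fin.last j)) hne
  rw [Fin.snoc_init_self, hinit, Fin.snoc_init_self] at hdisj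
  exact hdisj.mono (dilSq_subset_dilSq_comp_castLE hα₀ hα₁ hℓ hjn w)
    (dilSq_subset_dilSq_comp_castLE hα₀ hα₁ hℓ hjm w')

lemma exists_first_ne_of_not_prefix {n m : ℕ} {w : Fin n → Fin 4} {w' : Fin m → Fin 4}
    (H₁ : ¬ ∃ h : n ≤ m, ∀ k : Fin n, w k = w' (Fin.castLE h k))
    (H₂ : ¬ ∃ h : m ≤ n, ∀ k : Fin m, w' k = w (Fin.castLE h k)) :
    ∃ (j : ℕ) (hjn : j < n) (hjm : j < m),
      (∀ k : Fin j, w (Fin.castLE hjn.le k) = w' (Fin.castLE hjm.le k)) ∧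
        w ⟨j, hjn⟩ ≠ w' ⟨j, hjm⟩ := by
  classical
  have hex : ∃ j, ∃ (hjn : j < n) (hjm : j < m), w ⟨j, hjn⟩ ≠ w' ⟨j, hjm⟩ := by
    by_contra! hagree
    rcases le_total n m with h | h
    · exact H₁ ⟨h, fun k => hagree k k.2 (k.2.trans_le h)⟩
    · exact H₂ ⟨h, fun k => (hagree k (k.2.trans_le h) k.2).symm⟩
  obtain ⟨hjn, hjm, hne⟩ := Nat.find_spec hex
  refine ⟨Nat.find hex, hjn, hjm, fun k => ?_, hne⟩
  by_contra hk
  exact Nat.find_min hex k.2 ⟨k.2.trans hjn, k.2.trans hjm, hk⟩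

lemma disjoint_dilSq_of_not_prefix {α ℓ : ℝ} (hα₀ : 0 < α) (hα₁ : α < 1) (hℓ : 1 < ℓ)
    (hαℓ : ℓ * α < 1 - α) {n m : ℕ} {w : Fin n → Fin 4} {w' : Fin m → Fin 4}
    (H₁ : ¬ ∃ h : n ≤ m, ∀ k : Fin n, w k = w' (Fin.castLE h k))
    (H₂ : ¬ ∃ h : m ≤ n, ∀ k : Fin m, w' k = w (Fin.castLE h k)) :
    Disjoint (dilSq α ℓ w) (dilSq α ℓ w') := by
  obtain ⟨j, hjn, hjm, hpre, hne⟩ := exists_first_ne_of_not_prefix H₁ H₂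
  exact disjoint_dilSq_of_first_ne hα₀ hα₁ hℓ hαℓ hjn hjm hpre hne

lemma disjoint_frontier_dilSq_of_prefix {α ℓ : ℝ} (hα₀ : 0 < α) (hα₁ : α < 1) (hℓ : 1 < ℓ)
    {n m : ℕ} {w : Fin n → Fin 4} {w' : Fin m → Fin 4} (h : n ≤ m)
    (hpre : ∀ k : Fin n, w k = w' (Fin.castLE h k)) (hnm : n ≠ m) :
    Disjoint (frontier (dilSq α ℓ w)) (frontier (dilSq α ℓ w')) := by
  have hlt : n < m := h.lt_of_ne hnm
  have hnest : dilSq α ℓ w' ⊆ interior (dilSq α ℓ w) := by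
    rw [show w = w' ∘ Fin.castLE hlt.le from funext hpre]
    exact dilSq_subset_interior_dilSq_comp_castLE hα₀ hα₁ hℓ hlt w'
  exact disjoint_interior_frontier.symm.mono_right
    ((isClosed_dilSq α ℓ w').frontier_subset.trans hnest)

theorem stmt8 (α : ℝ) (hα : α ∈ Set.Ioo (0 : ℝ) (1 / 2))
    (ℓ : ℝ) (hℓ₁ : 1 < ℓ) (hℓ₂ : ℓ < 1 / (2 * α)) :
    (∀ (n : ℕ) (w : Fin n → Fin 4) (i : Fin 4),
      dilSq α ℓ (Fin.snoc w i) ⊆ interior (dilSq α ℓ w)) ∧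
    (∀ (n m : ℕ) (w : Fin n → Fin 4) (w' : Fin m → Fin 4),
      (¬ ∃ h : n ≤ m, ∀ k : Fin n, w k = w' (Fin.castLE h k)) →
      (¬ ∃ h : m ≤ n, ∀ k : Fin m, w' k = w (Fin.castLE h k)) →
      dilSq α ℓ w ∩ dilSq α ℓ w' = ∅) ∧
    (∀ (n m : ℕ) (w : Fin n → Fin 4) (w' : Fin m → Fin 4),
      (¬ ∃ h : n = m, ∀ k : Fin n, w k = w' (Fin.cast h k)) →
      frontier (dilSq α ℓ w) ∩ frontier (dilSq α ℓ w') = ∅) := by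
  obtain ⟨hα₀, hα₂⟩ := hα
  have hα₁ : α < 1 := by linarith
  have hαℓ : ℓ * α < 1 - α := by
    rw [lt_div_iff₀ (by positivity)] at hℓ₂
    linarith
  refine ⟨fun n w a => dilSq_snoc_subset_interior hα₀ hα₁ hℓ₁ w a,
    fun n m w w' H₁ H₂ => Set.disjoint_iff_inter_eq_empty.mp
      (disjoint_dilSq_of_not_prefix hα₀ hα₁ hℓ₁ hαℓ H₁ H₂),
    fun n m w w' H => Set.disjoint_iff_inter_eq_empty.mp ?_⟩
  by_cases H₁ : ∃ h : n ≤ m, ∀ k : Fin n, w k = w' (Fin.castLE h k)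
  · obtain ⟨h, hpre⟩ := H₁
    exact disjoint_frontier_dilSq_of_prefix hα₀ hα₁ hℓ₁ h hpre fun e => H ⟨e, hpre⟩
  by_cases H₂ : ∃ h : m ≤ n, ∀ k : Fin m, w' k = w (Fin.castLE h k)
  · obtain ⟨h, hpre⟩ := H₂
    exact (disjoint_frontier_dilSq_of_prefix hα₀ hα₁ hℓ₁ h hpre
      fun e => H ⟨e.symm, fun k => (hpre (Fin.cast e.symm k)).symm⟩).symm
  exact (disjoint_dilSq_of_not_prefix hα₀ hα₁ hℓ₁ hαℓ H₁ H₂).mono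
    (isClosed_dilSq α ℓ w).frontier_subset (isClosed_dilSq α ℓ w').frontier_subset
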